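/- arXiv:0709.1514 — 6 statements merged into one kernel-verified Lean document; each statement's English description precedes it below -/
import Mathlib

section
/- Let P : ℝ → ℝ be convex, let β ∈ ℝ, y > 0, L ≥ 0 and ε ≥ 0, and let f : ℝ → ℝ be twice differentiable on [β−y, β+y] with |f''(t)| ≤ L for all t ∈ [β−y, β+y]. Assume P(t) ≤ f(t) for all t ∈ [β−y, β+y] and f(β) − P(β) ≤ ε. Then every subgradient a of P at β (i.e., every a with a·(t−β) ≤ P(t) − P(β) for all t ∈ ℝ) satisfies f'(β) − Ly/2 − ε/y ≤ a ≤ f'(β) + Ly/2 + ε/y. -/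
open Set

/-!
The bound `f'' ≤ L` makes `t ↦ L/2 (t - β)² - f t` convex, so it lies above its tangent line
at `β`; this is the quadratic upper Taylor bound `f z ≤ f β + f' β (z - β) + L/2 (z - β)²`.
Taking `t = β ± y` in the subgradient inequality and using `P ≤ f` there and `f β ≤ P β + ε`
gives `± a y ≤ ± f' β y + L y²/2 + ε`.
-/

theorem ConvexOn.add_mul_sub_le_of_hasDerivAt {S : Set ℝ} {g : ℝ → ℝ} {g' x z : ℝ}
    (hg : ConvexOn ℝ S g) (hx : x ∈ S) (hz : z ∈ S) (hd : HasDerivAt g g' x) :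
    g x + g' * (z - x) ≤ g z := by
  rcases lt_trichotomy x z with hxz | rfl | hzx
  · have h := hg.le_slope_of_hasDerivAt hx hz hxz hd
    rw [slope_def_field, le_div_iff₀ (sub_pos.mpr hxz)] at h
    linarith
  · simp
  · have h := hg.slope_le_of_hasDerivAt hz hx hzx hd
    rw [slope_def_field, div_le_iff₀ (sub_pos.mpr hzx)] at h
    linarith

theorem le_add_deriv_mul_add_of_deriv2_le {D : Set ℝ} (hD : Convex ℝ D) {f f' f'' : ℝ → ℝ}
    {L x z : ℝ} (hf' : ∀ t ∈ D, HasDerivAt f (f' t) t) (hf'' : ∀ t ∈ D, HasDerivAt f' (f'' t) t)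
    (hbound : ∀ t ∈ D, f'' t ≤ L) (hx : x ∈ D) (hz : z ∈ D) :
    f z ≤ f x + f' x * (z - x) + L / 2 * (z - x) ^ 2 := by
  set g : ℝ → ℝ := fun t => L / 2 * (t - x) ^ 2 - f t
  have hg' : ∀ t ∈ D, HasDerivAt g (L * (t - x) - f' t) t := fun t ht =>
    ((((hasDerivAt_id' t).sub_const x).pow 2).const_mul (L / 2) |>.sub (hf' t ht)).congr_deriv
      (by push_cast; ring)
  have hg'' : ∀ t ∈ D, HasDerivAt (fun t => L * (t - x) - f' t) (L - f'' t) t := fun t ht =>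
    ((((hasDerivAt_id' t).sub_const x).const_mul L).sub (hf'' t ht)).congr_deriv (by ring)
  have hconv : ConvexOn ℝ D g :=
    convexOn_of_hasDerivWithinAt2_nonneg hD
      (fun t ht => (hg' t ht).continuousAt.continuousWithinAt)
      (fun t ht => (hg' t (interior_subset ht)).hasDerivWithinAt)
      (fun t ht => (hg'' t (interior_subset ht)).hasDerivWithinAt)
      (fun t ht => sub_nonneg.mpr (hbound t (interior_subset ht)))
  have := hconv.add_mul_sub_le_of_hasDerivAt hx hz (hg' x hx)
  simp only [g, sub_self] at this
  linarith

theorem subgradient_close_to_deriv_of_smooth_majorant_general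
    (P f : ℝ → ℝ) (β y L ε a : ℝ)
    (hy : 0 < y)
    (f' f'' : ℝ → ℝ)
    (hf' : ∀ t ∈ Icc (β - y) (β + y), HasDerivAt f (f' t) t)
    (hf'' : ∀ t ∈ Icc (β - y) (β + y), HasDerivAt f' (f'' t) t)
    (hbound : ∀ t ∈ Icc (β - y) (β + y), |f'' t| ≤ L)
    (hPf : ∀ t ∈ Icc (β - y) (β + y), P t ≤ f t)
    (hfP : f β - P β ≤ ε)
    (ha : ∀ t : ℝ, a * (t - β) ≤ P t - P β) :
    f' β - L * y / 2 - ε / y ≤ a ∧ a ≤ f' β + L * y / 2 + ε / y := by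
  have hβ : β ∈ Icc (β - y) (β + y) := ⟨by linarith, by linarith⟩
  have hleft : β - y ∈ Icc (β - y) (β + y) := ⟨le_rfl, by linarith⟩
  have hright : β + y ∈ Icc (β - y) (β + y) := ⟨by linarith, le_rfl⟩
  have taylor : ∀ z ∈ Icc (β - y) (β + y),
      f z ≤ f β + f' β * (z - β) + L / 2 * (z - β) ^ 2 := fun z hz =>
    le_add_deriv_mul_add_of_deriv2_le (convex_Icc _ _) hf' hf''
      (fun t ht => le_of_abs_le (hbound t ht)) hβ hz
  constructor
  · rw [sub_le_comm, le_div_iff₀ hy]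
    linarith [ha (β - y), hPf _ hleft, taylor _ hleft]
  · rw [← sub_le_iff_le_add', le_div_iff₀ hy]
    linarith [ha (β + y), hPf _ hright, taylor _ hright]

/-- Let `P` be convex, `y > 0`, `L ≥ 0`, `ε ≥ 0`, and let `f` be twice differentiable on
`[β-y, β+y]` with `|f''| ≤ L` there. If `P ≤ f` on `[β-y, β+y]` and `f β - P β ≤ ε`,
then every subgradient `a` of `P` at `β` satisfies
`f'(β) - Ly/2 - ε/y ≤ a ≤ f'(β) + Ly/2 + ε/y`. -/
theorem subgradient_close_to_deriv_of_smooth_majorant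
    (P f : ℝ → ℝ) (β y L ε a : ℝ)
    (hP : ConvexOn ℝ univ P) (hy : 0 < y) (hL : 0 ≤ L) (hε : 0 ≤ ε)
    (f' f'' : ℝ → ℝ)
    (hf' : ∀ t ∈ Icc (β - y) (β + y), HasDerivAt f (f' t) t)
    (hf'' : ∀ t ∈ Icc (β - y) (β + y), HasDerivAt f' (f'' t) t)
    (hbound : ∀ t ∈ Icc (β - y) (β + y), |f'' t| ≤ L)
    (hPf : ∀ t ∈ Icc (β - y) (β + y), P t ≤ f t)
    (hfP : f β - P β ≤ ε)
    (ha : ∀ t : ℝ, a * (t - β) ≤ P t - P β) :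
    f' β - L * y / 2 - ε / y ≤ a ∧ a ≤ f' β + L * y / 2 + ε / y :=
  subgradient_close_to_deriv_of_smooth_majorant_general P f β y L ε a hy f' f'' hf' hf'' hbound hPf
    hfP ha
end

section
/- Let r > 0, let P : ℝ → ℝ be convex, and let (f_k)_{k≥1} be a sequence of functions, each twice differentiable on (β−r, β+r), such that: P(t) ≤ f_k(t) for all t ∈ (β−r, β+r) and all k; f_k(β) − P(β) → 0 as k → ∞; and there exists L < ∞ with |f_k''(t)| ≤ L for all k and all t ∈ (β−r, β+r). Then P is differentiable at β, the limit lim_{k→∞} f_k'(β) exists, and P'(β) = lim_{k→∞} f_k'(β). -/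
open Set Filter Topology

/-!
Each `f k` lies below its tangent parabola at `β`: `f k (β + h) ≤ f k β + f' k β * h + L * h ^ 2`.
As `P ≤ f k`, this bounds `P (β + h)` and `P (β - h)` from above, and midpoint convexity
`P β ≤ (P (β + h) + P (β - h)) / 2` turns the bound at `β - h` into a lower bound at `β + h`:
`|P (β + h) - P β - f' k β * h| ≤ (f k β - P β) + L * h ^ 2`.
Comparing two indices at one small fixed `h` shows that `f' k β` is a Cauchy sequence, and in the
limit the first-order remainder of `P` at `β` is `O(h ^ 2)`.
-/

theorem Convex.abs_sub_sub_mul_le_of_abs_second_deriv_le {f f' f'' : ℝ → ℝ} {s : Set ℝ}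
    {L : ℝ} (hs : Convex ℝ s) (hf : ∀ t ∈ s, HasDerivWithinAt f (f' t) s t)
    (hf' : ∀ t ∈ s, HasDerivWithinAt f' (f'' t) s t) (hL : ∀ t ∈ s, |f'' t| ≤ L)
    {x t : ℝ} (hx : x ∈ s) (ht : t ∈ s) :
    |f t - f x - f' x * (t - x)| ≤ L * (t - x) ^ 2 := by
  have hxt : uIcc x t ⊆ s := hs.ordConnected.uIcc_subset hx ht
  have hlip : ∀ y ∈ uIcc x t, ‖f' y - f' x‖ ≤ L * |t - x| := fun y hy =>
    calc ‖f' y - f' x‖ ≤ L * ‖y - x‖ :=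
          hs.norm_image_sub_le_of_norm_hasDerivWithin_le hf' hL hx (hxt hy)
      _ ≤ L * |t - x| :=
          mul_le_mul_of_nonneg_left (abs_sub_left_of_mem_uIcc hy)
            ((abs_nonneg _).trans (hL x hx))
  have hderiv : ∀ y ∈ uIcc x t, HasDerivWithinAt (fun z => f z - f' x * z) (f' y - f' x)
      (uIcc x t) y := fun y hy =>
    ((hf y (hxt hy)).mono hxt).sub (by simpa using (hasDerivWithinAt_id y _).const_mul (f' x))
  have := (convex_uIcc x t).norm_image_sub_le_of_norm_hasDerivWithin_le hderiv hlip
    left_mem_uIcc right_mem_uIcc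
  rw [Real.norm_eq_abs, Real.norm_eq_abs] at this
  calc |f t - f x - f' x * (t - x)| = |f t - f' x * t - (f x - f' x * x)| := by ring_nf
    _ ≤ L * |t - x| * |t - x| := this
    _ = L * (t - x) ^ 2 := by rw [mul_assoc, abs_mul_abs_self, sq]

theorem ConvexOn.abs_sub_sub_mul_le_of_le {P : ℝ → ℝ} {s : Set ℝ} (hP : ConvexOn ℝ s P)
    {β a b c h : ℝ} (hsp : β + h ∈ s) (hsm : β - h ∈ s)
    (hPp : P (β + h) ≤ b + a * h + c * h ^ 2) (hPm : P (β - h) ≤ b - a * h + c * h ^ 2) :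
    |P (β + h) - P β - a * h| ≤ b - P β + c * h ^ 2 := by
  have hmid := hP.2 hsp hsm (by norm_num : (0 : ℝ) ≤ 1 / 2) (by norm_num : (0 : ℝ) ≤ 1 / 2)
    (by norm_num)
  rw [show (1 / 2 : ℝ) • (β + h) + (1 / 2 : ℝ) • (β - h) = β by simp only [smul_eq_mul]; ring,
    smul_eq_mul, smul_eq_mul] at hmid
  rw [abs_le]
  constructor <;> linarith

theorem cauchySeq_of_abs_sub_mul_le {g : ℝ → ℝ} {a ε : ℕ → ℝ} {L : ℝ}
    (hε : Tendsto ε atTop (𝓝 0))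
    (hg : ∀ᶠ h in 𝓝 (0 : ℝ), ∀ k, |g h - a k * h| ≤ ε k + L * h ^ 2) :
    CauchySeq a := by
  rw [Metric.cauchySeq_iff']
  intro e he
  have hLh : Tendsto (fun h => L * h) (𝓝[>] (0 : ℝ)) (𝓝 0) := by
    simpa using (tendsto_id.const_mul L).mono_left (nhdsWithin_le_nhds (a := (0 : ℝ)))
  obtain ⟨h, hgh, hLe, (hh : 0 < h)⟩ := ((hg.filter_mono nhdsWithin_le_nhds).and
    ((hLh.eventually (gt_mem_nhds (by positivity : (0 : ℝ) < e / 4))).and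
      self_mem_nhdsWithin)).exists
  obtain ⟨N, hN⟩ := eventually_atTop.mp
    (hε.eventually (gt_mem_nhds (by positivity : (0 : ℝ) < e * h / 4)))
  refine ⟨N, fun n hn => ?_⟩
  rw [Real.dist_eq, ← mul_lt_mul_iff_left₀ hh]
  calc |a n - a N| * h = |(g h - a N * h) - (g h - a n * h)| := by
        rw [show (g h - a N * h) - (g h - a n * h) = (a n - a N) * h by ring, abs_mul,
          abs_of_pos hh]
    _ ≤ |g h - a N * h| + |g h - a n * h| := abs_sub _ _
    _ ≤ ε N + ε n + 2 * (L * h) * h := by linarith [hgh n, hgh N]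
    _ < e * h := by linarith [hN n hn, hN N le_rfl, mul_lt_mul_of_pos_right hLe hh]

theorem hasDerivAt_of_abs_sub_sub_mul_le_sq {P : ℝ → ℝ} {β d L : ℝ}
    (hP : ∀ᶠ h in 𝓝 (0 : ℝ), |P (β + h) - P β - d * h| ≤ L * h ^ 2) :
    HasDerivAt P d β := by
  refine hasDerivAt_iff_isLittleO_nhds_zero.mpr
    (Asymptotics.IsBigO.trans_isLittleO ?_ (Asymptotics.isLittleO_pow_id one_lt_two))
  refine Asymptotics.IsBigO.of_bound L (hP.mono fun h hh => ?_)
  simpa [mul_comm h d, abs_of_nonneg (sq_nonneg h)] using hh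

theorem exists_hasDerivAt_tendsto_of_abs_sub_sub_mul_le {P : ℝ → ℝ} {β L : ℝ} {a ε : ℕ → ℝ}
    (hε : Tendsto ε atTop (𝓝 0))
    (hP : ∀ᶠ h in 𝓝 (0 : ℝ), ∀ k, |P (β + h) - P β - a k * h| ≤ ε k + L * h ^ 2) :
    ∃ d, HasDerivAt P d β ∧ Tendsto a atTop (𝓝 d) := by
  obtain ⟨d, hd⟩ := cauchySeq_tendsto_of_complete
    (cauchySeq_of_abs_sub_mul_le (g := fun h => P (β + h) - P β) hε
      (by simpa only [sub_sub] using hP))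
  refine ⟨d, hasDerivAt_of_abs_sub_sub_mul_le_sq (L := L) (hP.mono fun h hh => ?_), hd⟩
  simpa using le_of_tendsto_of_tendsto'
    ((tendsto_const_nhds.sub (hd.mul_const h)).abs) (hε.add tendsto_const_nhds) hh

/-- Let `P` be convex and `(f_k)` a sequence of functions, each twice differentiable on
`(β-r, β+r)`, with `P ≤ f_k` on `(β-r, β+r)`, `f_k β - P β → 0`, and with second
derivatives uniformly bounded by some `L` on `(β-r, β+r)`. Then `P` is differentiable
at `β` and `P'(β) = lim_k f_k'(β)`. -/
theorem convex_differentiable_of_smooth_majorants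
    (P : ℝ → ℝ) (β r : ℝ) (hr : 0 < r) (hP : ConvexOn ℝ univ P)
    (f f' f'' : ℕ → ℝ → ℝ)
    (hd1 : ∀ k, ∀ t ∈ Ioo (β - r) (β + r), HasDerivAt (f k) (f' k t) t)
    (hd2 : ∀ k, ∀ t ∈ Ioo (β - r) (β + r), HasDerivAt (f' k) (f'' k t) t)
    (hPf : ∀ k, ∀ t ∈ Ioo (β - r) (β + r), P t ≤ f k t)
    (hlim : Tendsto (fun k => f k β - P β) atTop (𝓝 0))
    (L : ℝ) (hL : ∀ k, ∀ t ∈ Ioo (β - r) (β + r), |f'' k t| ≤ L) :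
    ∃ d : ℝ, HasDerivAt P d β ∧ Tendsto (fun k => f' k β) atTop (𝓝 d) := by
  have hβ : β ∈ Ioo (β - r) (β + r) := ⟨by linarith, by linarith⟩
  have hnear : ∀ᶠ h in 𝓝 (0 : ℝ), β + h ∈ Ioo (β - r) (β + r) ∧ β - h ∈ Ioo (β - r) (β + r) :=
    (((continuous_const.add continuous_id).tendsto' 0 β (add_zero β)).eventually
        (Ioo_mem_nhds hβ.1 hβ.2)).and
      (((continuous_const.sub continuous_id).tendsto' 0 β (sub_zero β)).eventually
        (Ioo_mem_nhds hβ.1 hβ.2))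
  have hmajorant : ∀ k h, β + h ∈ Ioo (β - r) (β + r) →
      P (β + h) ≤ f k β + f' k β * h + L * h ^ 2 := fun k h hh => by
    have := (convex_Ioo _ _).abs_sub_sub_mul_le_of_abs_second_deriv_le
      (fun x hx => (hd1 k x hx).hasDerivWithinAt) (fun x hx => (hd2 k x hx).hasDerivWithinAt)
      (hL k) hβ hh
    rw [add_sub_cancel_left] at this
    linarith [hPf k _ hh, (abs_le.mp this).2]
  refine exists_hasDerivAt_tendsto_of_abs_sub_sub_mul_le (L := L) hlim
    (hnear.mono fun h ⟨hp, hm⟩ k => hP.abs_sub_sub_mul_le_of_le (mem_univ _) (mem_univ _)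
      (hmajorant k h hp) ?_)
  simpa [← sub_eq_add_neg] using hmajorant k (-h) (by rwa [← sub_eq_add_neg])
end

section
/- For every t ≥ 0 and every x ∈ ℝ, A_0^{(v_1,…,v_{k−1}, v_k + t)}(x) = A_0^{(v_1,…,v_{k−1}, v_k)}(x) + t/2. In other words, increasing the innermost variance v_k by t increases the recursively defined function A_0 by exactly the constant t/2. -/
open MeasureTheory ProbabilityTheory Real

noncomputable section

/-- The centered Gaussian measure on `ℝ` with variance `v` (Dirac at `0` if `v ≤ 0`). -/
def gauss (v : ℝ) : Measure ℝ := gaussianReal 0 v.toNNReal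

/-- The recursively defined functions: `parisiB m v k j = A_{k-j}^{(v)}`, so
`parisiB m v k 0 = A_k = log cosh` and `parisiB m v k k = A_0`, where
`A_{l-1}(x) = (1/m_l) log ∫ exp (m_l A_l (x+y)) dγ_{v_l}(y)`. -/
def parisiB (m v : ℕ → ℝ) (k : ℕ) : ℕ → ℝ → ℝ
  | 0, x => Real.log (Real.cosh x)
  | j + 1, x =>
      (1 / m (k - j)) *
        Real.log (∫ y, Real.exp (m (k - j) * parisiB m v k j (x + y)) ∂(gauss (v (k - j))))

/-! The Gaussian moment generating function computes `A_{k-1} = log cosh + v_k / 2` explicitly,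
so raising `v_k` by `t` shifts `A_{k-1}` by `t / 2`. Every later step
`f ↦ (1/m) log ∫ exp (m f (· + y)) dγ_v(y)` commutes with adding a constant, provided the integral
is finite (otherwise the Bochner integral is `0` and the identity fails). Finiteness holds because
each `A_l` grows at most like `|x| + D`, and `exp (m |y|)` is Gaussian-integrable. -/

instance (v : ℝ) : IsProbabilityMeasure (gauss v) := by
  unfold gauss; infer_instance

lemma integrable_exp_mul_gauss (c v : ℝ) : Integrable (fun y ↦ exp (c * y)) (gauss v) :=
  integrable_exp_mul_gaussianReal c

lemma integrable_exp_mul_abs_gauss (c v : ℝ) : Integrable (fun y ↦ exp (c * |y|)) (gauss v) :=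
  integrable_exp_mul_abs (integrable_exp_mul_gauss c v) (integrable_exp_mul_gauss (-c) v)

lemma integral_exp_mul_gauss (c v : ℝ) :
    ∫ y, exp (c * y) ∂gauss v = exp (v.toNNReal * c ^ 2 / 2) := by
  simpa [mgf, gauss] using congrFun (mgf_id_gaussianReal (μ := 0) (v := v.toNNReal)) c

def parisiStep (c v : ℝ) (f : ℝ → ℝ) (x : ℝ) : ℝ :=
  (1 / c) * log (∫ y, exp (c * f (x + y)) ∂gauss v)

lemma parisiB_succ (m v : ℕ → ℝ) (k j : ℕ) :
    parisiB m v k (j + 1) = parisiStep (m (k - j)) (v (k - j)) (parisiB m v k j) := rfl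

section Step

variable {f : ℝ → ℝ} {c D : ℝ}

lemma exp_mul_comp_add_le (hD : ∀ z, f z ≤ D + |z|) (hc : 0 ≤ c) (x y : ℝ) :
    exp (c * f (x + y)) ≤ exp (c * (D + |x|)) * exp (c * |y|) := by
  rw [← exp_add, ← mul_add]
  gcongr
  linarith [hD (x + y), abs_add_le x y]

lemma integrable_exp_mul_comp_add_gauss (hf : Measurable f) (hD : ∀ z, f z ≤ D + |z|)
    (hc : 0 ≤ c) (v x : ℝ) : Integrable (fun y ↦ exp (c * f (x + y))) (gauss v) := by
  refine ((integrable_exp_mul_abs_gauss c v).const_mul (exp (c * (D + |x|)))).mono'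
    (by fun_prop : Measurable fun y ↦ exp (c * f (x + y))).aestronglyMeasurable
    (.of_forall fun y ↦ ?_)
  rw [norm_of_nonneg (exp_pos _).le]
  exact exp_mul_comp_add_le hD hc x y

lemma measurable_parisiStep (hf : Measurable f) (c v : ℝ) : Measurable (parisiStep c v f) := by
  have hF : StronglyMeasurable fun p : ℝ × ℝ ↦ exp (c * f (p.1 + p.2)) :=
    (by fun_prop : Measurable fun p : ℝ × ℝ ↦ exp (c * f (p.1 + p.2))).stronglyMeasurable
  exact (hF.integral_prod_right' (ν := gauss v)).measurable.log.const_mul _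

lemma parisiStep_le (hf : Measurable f) (hD : ∀ z, f z ≤ D + |z|) (hc : 0 < c) (v x : ℝ) :
    parisiStep c v f x ≤ D + (1 / c) * log (∫ y, exp (c * |y|) ∂gauss v) + |x| := by
  have hI := integral_exp_pos (integrable_exp_mul_comp_add_gauss hf hD hc.le v x)
  have hJ := integral_exp_pos (integrable_exp_mul_abs_gauss c v)
  have hle : ∫ y, exp (c * f (x + y)) ∂gauss v
      ≤ exp (c * (D + |x|)) * ∫ y, exp (c * |y|) ∂gauss v := by
    rw [← integral_const_mul]
    exact integral_mono (integrable_exp_mul_comp_add_gauss hf hD hc.le v x)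
      ((integrable_exp_mul_abs_gauss c v).const_mul _) (exp_mul_comp_add_le hD hc.le x)
  calc parisiStep c v f x
      ≤ (1 / c) * log (exp (c * (D + |x|)) * ∫ y, exp (c * |y|) ∂gauss v) := by
        unfold parisiStep; gcongr
    _ = D + (1 / c) * log (∫ y, exp (c * |y|) ∂gauss v) + |x| := by
        rw [log_mul (exp_pos _).ne' hJ.ne', log_exp]
        field_simp
        ring

lemma parisiStep_add_const (hc : c ≠ 0) {v x : ℝ}
    (hint : Integrable (fun y ↦ exp (c * f (x + y))) (gauss v)) (s : ℝ) :
    parisiStep c v (fun z ↦ f z + s) x = parisiStep c v f x + s := by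
  have hexp : ∀ y, exp (c * (f (x + y) + s)) = exp (c * f (x + y)) * exp (c * s) := fun y ↦ by
    rw [← exp_add, mul_add]
  simp only [parisiStep, hexp, integral_mul_const]
  rw [log_mul (integral_exp_pos hint).ne' (exp_pos _).ne', log_exp]
  field_simp

end Step

lemma parisiStep_one_log_cosh (v x : ℝ) :
    parisiStep 1 v (fun z ↦ log (cosh z)) x = log (cosh x) + v.toNNReal / 2 := by
  have hcosh : ∀ y, exp (1 * log (cosh (x + y)))
      = exp x / 2 * exp (1 * y) + exp (-x) / 2 * exp (-1 * y) := fun y ↦ by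
    rw [one_mul, exp_log (cosh_pos _), cosh_eq, exp_add, neg_add, exp_add]
    ring_nf
  simp only [parisiStep, hcosh]
  rw [integral_add ((integrable_exp_mul_gauss 1 v).const_mul _)
      ((integrable_exp_mul_gauss (-1) v).const_mul _),
    integral_const_mul, integral_const_mul, integral_exp_mul_gauss, integral_exp_mul_gauss]
  have hsum : exp x / 2 * exp (v.toNNReal * 1 ^ 2 / 2)
      + exp (-x) / 2 * exp (v.toNNReal * (-1) ^ 2 / 2) = cosh x * exp (v.toNNReal / 2) := by
    rw [cosh_eq]; ring_nf
  rw [hsum, log_mul (cosh_pos x).ne' (exp_pos _).ne', log_exp]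
  ring

lemma parisiB_one {m : ℕ → ℝ} {k : ℕ} (hmk : m k = 1) (v : ℕ → ℝ) (x : ℝ) :
    parisiB m v k 1 x = log (cosh x) + (v k).toNNReal / 2 := by
  rw [parisiB_succ, Nat.sub_zero, hmk]
  exact parisiStep_one_log_cosh (v k) x

lemma log_cosh_le_abs (x : ℝ) : log (cosh x) ≤ |x| := by
  rw [log_le_iff_le_exp (cosh_pos x), cosh_eq]
  linarith [exp_le_exp.2 (le_abs_self x), exp_le_exp.2 (neg_le_abs x)]

lemma parisiB_measurable_and_le_add_abs {m : ℕ → ℝ} {k : ℕ} (hm : ∀ l, 1 ≤ l → l ≤ k → 0 < m l)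
    (v : ℕ → ℝ) :
    ∀ j ≤ k, Measurable (parisiB m v k j) ∧ ∃ D, ∀ z, parisiB m v k j z ≤ D + |z|
  | 0, _ => ⟨show Measurable fun z ↦ log (cosh z) by fun_prop, 0, fun z ↦ by
      simpa [parisiB] using log_cosh_le_abs z⟩
  | j + 1, hj => by
    obtain ⟨hmeas, D, hD⟩ := parisiB_measurable_and_le_add_abs hm v j (by omega)
    rw [parisiB_succ]
    exact ⟨measurable_parisiStep hmeas _ _, _,
      parisiStep_le hmeas hD (hm (k - j) (by omega) (by omega)) _⟩

lemma parisiB_add_const {m v w : ℕ → ℝ} {k : ℕ} (hm : ∀ l, 1 ≤ l → l ≤ k → 0 < m l)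
    (hw : ∀ l, 1 ≤ l → l < k → w l = v l) {s : ℝ}
    (h1 : ∀ x, parisiB m w k 1 x = parisiB m v k 1 x + s) :
    ∀ j, 1 ≤ j → j ≤ k → ∀ x, parisiB m w k j x = parisiB m v k j x + s := by
  intro j hj
  induction j, hj using Nat.le_induction with
  | base => exact fun _ ↦ h1
  | succ j hj ih =>
    intro hjk x
    obtain ⟨hmeas, D, hD⟩ := parisiB_measurable_and_le_add_abs hm v j (by omega)
    have hc := hm (k - j) (by omega) (by omega)
    rw [parisiB_succ, parisiB_succ, hw (k - j) (by omega) (by omega), funext (ih (by omega))]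
    exact parisiStep_add_const hc.ne' (integrable_exp_mul_comp_add_gauss hmeas hD hc.le _ x) s

/-- Increasing the innermost variance `v_k` by `t ≥ 0` increases `A_0` by exactly `t/2`:
`A_0^{(v_1,…,v_{k-1},v_k+t)}(x) = A_0^{(v_1,…,v_k)}(x) + t/2`. -/
theorem parisiB_update_last_variance
    (k : ℕ) (hk : 1 ≤ k) (m v : ℕ → ℝ)
    (hm1 : 0 < m 1) (hmono : ∀ l, 1 ≤ l → l < k → m l ≤ m (l + 1)) (hmk : m k = 1)
    (hv : ∀ l, 1 ≤ l → l ≤ k → 0 ≤ v l)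
    (t : ℝ) (ht : 0 ≤ t) (x : ℝ) :
    parisiB m (Function.update v k (v k + t)) k k x = parisiB m v k k x + t / 2 := by
  have hm : ∀ l, 1 ≤ l → l ≤ k → 0 < m l := by
    intro l hl
    induction l, hl using Nat.le_induction with
    | base => exact fun _ ↦ hm1
    | succ l hl ih => exact fun hlk ↦ (ih (by omega)).trans_le (hmono l hl (by omega))
  have hvk := hv k hk le_rfl
  refine parisiB_add_const hm (fun l _ hl ↦ Function.update_of_ne hl.ne _ _) (fun z ↦ ?_)
    k hk le_rfl x
  rw [parisiB_one hmk, parisiB_one hmk, Function.update_self, coe_toNNReal _ hvk,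
    coe_toNNReal _ (by positivity)]
  ring
end
end

section
/- For every δ ∈ (0,1] and all even integers 2 ≤ p₁ < p₂ there exists δ' > 0 with the following property: for every probability space and every random variable X with |X| ≤ 1 almost surely, if (E[X^{p₁}])^{1/p₁} ≤ (E[X^{p₂}])^{1/p₂} − δ, then E[(X − E[X])²] ≥ δ'. -/
/-!
Write `m = E[X]`. On `[-1, 1]` the map `x ↦ x ^ n` is `n`-Lipschitz, so
`E[X ^ p₂] ≤ m ^ p₂ + p₂ E|X - m|`, while Jensen gives `|m| ≤ (E[X ^ p₁]) ^ (1/p₁)`.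
The moment gap therefore yields `(|m| + δ) ^ p₂ ≤ |m| ^ p₂ + p₂ E|X - m|`, and
superadditivity of `t ↦ t ^ p₂` turns this into `E|X - m| ≥ δ ^ p₂ / p₂`.
Finally `(E|X - m|)² ≤ E[(X - m)²]` by Jensen again, so `δ' = (δ ^ p₂ / p₂)²` works.
-/

open MeasureTheory

universe u

lemma abs_pow_sub_pow_le_mul_abs_sub {x y : ℝ} (hx : |x| ≤ 1) (hy : |y| ≤ 1) (n : ℕ) :
    |x ^ n - y ^ n| ≤ n * |x - y| :=
  calc |x ^ n - y ^ n| ≤ |x - y| * n * max |x| |y| ^ (n - 1) := abs_pow_sub_pow_le ..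
    _ ≤ |x - y| * n * 1 := by
      gcongr
      exact pow_le_one₀ (le_max_of_le_left (abs_nonneg x)) (max_le hx hy)
    _ = n * |x - y| := by ring

section Moments

variable {Ω : Type*} [MeasurableSpace Ω] {μ : Measure Ω} {X : Ω → ℝ}

lemma integrable_pow_of_abs_le [IsFiniteMeasure μ] (hXm : AEStronglyMeasurable X μ) {C : ℝ}
    (hX : ∀ᵐ ω ∂μ, |X ω| ≤ C) (n : ℕ) : Integrable (fun ω ↦ X ω ^ n) μ :=
  Integrable.of_bound (hXm.pow n) (C ^ n) <| by
    filter_upwards [hX] with ω h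
    rw [Real.norm_eq_abs, abs_pow]
    exact pow_le_pow_left₀ (abs_nonneg _) h n

variable [IsProbabilityMeasure μ]

lemma abs_integral_le_one_of_abs_le_one (hX : ∀ᵐ ω ∂μ, |X ω| ≤ 1) : |∫ ω, X ω ∂μ| ≤ 1 := by
  simpa using norm_integral_le_of_norm_le_const (μ := μ) (f := X) (by simpa using hX)

lemma Even.pow_integral_le_integral_pow {p : ℕ} (hp : Even p) (hX : Integrable X μ)
    (hXp : Integrable (fun ω ↦ X ω ^ p) μ) : (∫ ω, X ω ∂μ) ^ p ≤ ∫ ω, X ω ^ p ∂μ :=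
  hp.convexOn_pow.map_integral_le (continuous_pow p).continuousOn isClosed_univ
    (.of_forall fun _ ↦ Set.mem_univ _) hX hXp

lemma Even.abs_integral_le_integral_pow_rpow_inv {p : ℕ} (hp : Even p) (hp0 : p ≠ 0)
    (hX : Integrable X μ) (hXp : Integrable (fun ω ↦ X ω ^ p) μ) :
    |∫ ω, X ω ∂μ| ≤ (∫ ω, X ω ^ p ∂μ) ^ (p⁻¹ : ℝ) := by
  have hJensen : |∫ ω, X ω ∂μ| ^ p ≤ ∫ ω, X ω ^ p ∂μ := by
    rw [hp.pow_abs]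
    exact hp.pow_integral_le_integral_pow hX hXp
  calc |∫ ω, X ω ∂μ| = (|∫ ω, X ω ∂μ| ^ p) ^ (p⁻¹ : ℝ) :=
        (Real.pow_rpow_inv_natCast (abs_nonneg _) hp0).symm
    _ ≤ (∫ ω, X ω ^ p ∂μ) ^ (p⁻¹ : ℝ) := by gcongr

lemma sq_integral_abs_le_integral_sq (hX : MemLp X 2 μ) :
    (∫ ω, |X ω| ∂μ) ^ 2 ≤ ∫ ω, X ω ^ 2 ∂μ := by
  simpa only [sq_abs] using
    even_two.pow_integral_le_integral_pow (hX.integrable one_le_two).abs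
      (by simpa only [sq_abs] using hX.integrable_sq)

lemma integral_pow_le_pow_add_mul_integral_abs_sub (hXm : AEStronglyMeasurable X μ)
    (hX : ∀ᵐ ω ∂μ, |X ω| ≤ 1) {c : ℝ} (hc : |c| ≤ 1) (n : ℕ) :
    ∫ ω, X ω ^ n ∂μ ≤ c ^ n + n * ∫ ω, |X ω - c| ∂μ := by
  have hXc : Integrable (fun ω ↦ |X ω - c|) μ :=
    ((Integrable.of_bound hXm 1 (by simpa using hX)).sub (integrable_const c)).abs
  have hpt : ∀ᵐ ω ∂μ, X ω ^ n ≤ c ^ n + n * |X ω - c| := by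
    filter_upwards [hX] with ω h
    linarith [le_abs_self (X ω ^ n - c ^ n), abs_pow_sub_pow_le_mul_abs_sub h hc n]
  calc ∫ ω, X ω ^ n ∂μ ≤ ∫ ω, (c ^ n + n * |X ω - c|) ∂μ :=
        integral_mono_ae (integrable_pow_of_abs_le hXm hX n)
          ((integrable_const _).add (hXc.const_mul _)) hpt
    _ = c ^ n + n * ∫ ω, |X ω - c| ∂μ := by
      rw [integral_add (integrable_const _) (hXc.const_mul _), integral_const_mul,
        integral_const, probReal_univ, one_smul]

lemma pow_div_le_integral_abs_sub_integral_of_moment_gap (hXm : AEStronglyMeasurable X μ)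
    (hX : ∀ᵐ ω ∂μ, |X ω| ≤ 1) {p q : ℕ} (hp : Even p) (hq : Even q) (hp0 : p ≠ 0)
    (hq0 : q ≠ 0) {δ : ℝ} (hδ : 0 ≤ δ)
    (hgap : (∫ ω, X ω ^ p ∂μ) ^ (p⁻¹ : ℝ) ≤ (∫ ω, X ω ^ q ∂μ) ^ (q⁻¹ : ℝ) - δ) :
    δ ^ q / q ≤ ∫ ω, |X ω - ∫ ω', X ω' ∂μ| ∂μ := by
  set m := ∫ ω, X ω ∂μ
  have hm : |m| ≤ 1 := abs_integral_le_one_of_abs_le_one hX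
  have hmp : |m| ≤ (∫ ω, X ω ^ p ∂μ) ^ (p⁻¹ : ℝ) :=
    hp.abs_integral_le_integral_pow_rpow_inv hp0 (.of_bound hXm 1 (by simpa using hX))
      (integrable_pow_of_abs_le hXm hX p)
  have hq_moment : (|m| + δ) ^ q ≤ ∫ ω, X ω ^ q ∂μ :=
    calc (|m| + δ) ^ q ≤ ((∫ ω, X ω ^ q ∂μ) ^ (q⁻¹ : ℝ)) ^ q := by
          gcongr
          linarith
      _ = ∫ ω, X ω ^ q ∂μ :=
          Real.rpow_inv_natCast_pow (integral_nonneg fun ω ↦ hq.pow_nonneg _) hq0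
  have hlip := integral_pow_le_pow_add_mul_integral_abs_sub hXm hX hm q
  have hsuper : |m| ^ q + δ ^ q ≤ (|m| + δ) ^ q := pow_add_pow_le (abs_nonneg m) hδ hq0
  rw [← hq.pow_abs m] at hlip
  rw [div_le_iff₀' (by positivity)]
  linarith

end Moments

theorem variance_lower_bound_of_moment_gap_general
    (δ : ℝ) (hδ0 : 0 < δ)
    (p₁ p₂ : ℕ) (he₁ : Even p₁) (he₂ : Even p₂) (hp₁ : 2 ≤ p₁) (hp₁₂ : p₁ < p₂) :
    ∃ δ' > (0 : ℝ), ∀ (Ω : Type u) [MeasureSpace Ω],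
      IsProbabilityMeasure (volume : Measure Ω) →
      ∀ X : Ω → ℝ, Measurable X → (∀ᵐ ω, |X ω| ≤ 1) →
      (∫ ω, X ω ^ p₁) ^ ((p₁ : ℝ)⁻¹) ≤ (∫ ω, X ω ^ p₂) ^ ((p₂ : ℝ)⁻¹) - δ →
      δ' ≤ ∫ ω, (X ω - ∫ ω', X ω') ^ 2 := by
  have hp₂ : 0 < p₂ := by omega
  refine ⟨(δ ^ p₂ / p₂) ^ 2, by positivity, fun Ω _ _ X hXm hX hgap ↦ ?_⟩
  have hX2 : MemLp X 2 := MemLp.of_bound hXm.aestronglyMeasurable 1 (by simpa using hX)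
  calc (δ ^ p₂ / p₂) ^ 2 ≤ (∫ ω, |X ω - ∫ ω', X ω'|) ^ 2 := by
        gcongr
        exact pow_div_le_integral_abs_sub_integral_of_moment_gap hXm.aestronglyMeasurable hX
          he₁ he₂ (by omega) hp₂.ne' hδ0.le hgap
    _ ≤ ∫ ω, (X ω - ∫ ω', X ω') ^ 2 :=
        sq_integral_abs_le_integral_sq (hX2.sub (memLp_const _))

/-- For every `δ ∈ (0,1]` and all even integers `2 ≤ p₁ < p₂` there is a `δ' > 0` such
that for every probability space and every random variable `X` with `|X| ≤ 1` a.s.,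
if `(E[X^{p₁}])^{1/p₁} ≤ (E[X^{p₂}])^{1/p₂} - δ`, then `E[(X - E[X])²] ≥ δ'`. -/
theorem variance_lower_bound_of_moment_gap
    (δ : ℝ) (hδ0 : 0 < δ) (hδ1 : δ ≤ 1)
    (p₁ p₂ : ℕ) (he₁ : Even p₁) (he₂ : Even p₂) (hp₁ : 2 ≤ p₁) (hp₁₂ : p₁ < p₂) :
    ∃ δ' > (0 : ℝ), ∀ (Ω : Type u) [MeasureSpace Ω],
      IsProbabilityMeasure (volume : Measure Ω) →
      ∀ X : Ω → ℝ, Measurable X → (∀ᵐ ω, |X ω| ≤ 1) →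
      (∫ ω, X ω ^ p₁) ^ ((p₁ : ℝ)⁻¹) ≤ (∫ ω, X ω ^ p₂) ^ ((p₂ : ℝ)⁻¹) - δ →
      δ' ≤ ∫ ω, (X ω - ∫ ω', X ω') ^ 2 :=
  variance_lower_bound_of_moment_gap_general δ hδ0 p₁ p₂ he₁ he₂ hp₁ hp₁₂
end

section
/- Let I ⊆ ℝ be an open interval, let (f_n) be a sequence of convex functions f_n : I → ℝ converging pointwise on I to a function f : I → ℝ, and let β ∈ I. If each f_n is differentiable at β and f is differentiable at β, then f_n'(β) → f'(β) as n → ∞. -/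
open Set Filter Topology

/-! A convex function's derivative at `β` lies between its left and right difference quotients
at `β`. These quotients converge along the sequence to those of the limit `g`, and by
differentiability of `g` they can be chosen arbitrarily close to `g'(β)` on both sides. -/

theorem tendsto_slope_of_tendsto {ι : Type*} {l : Filter ι} {f : ι → ℝ → ℝ} {g : ℝ → ℝ}
    {x y : ℝ} (hx : Tendsto (fun i => f i x) l (𝓝 (g x)))
    (hy : Tendsto (fun i => f i y) l (𝓝 (g y))) :
    Tendsto (fun i => slope (f i) x y) l (𝓝 (slope g x y)) := by
  simp only [slope_def_field]
  exact (hy.sub hx).div_const _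

section ConvexOn

variable {ι : Type*} {l : Filter ι} {S : Set ℝ} {f : ι → ℝ → ℝ} {g : ℝ → ℝ} {d : ι → ℝ}
  {x y : ℝ}

theorem ConvexOn.eventually_hasDerivAt_lt_of_slope_lt (hconv : ∀ i, ConvexOn ℝ S (f i))
    (hx : x ∈ S) (hy : y ∈ S) (hxy : x < y) (hd : ∀ i, HasDerivAt (f i) (d i) x)
    (hfx : Tendsto (fun i => f i x) l (𝓝 (g x))) (hfy : Tendsto (fun i => f i y) l (𝓝 (g y)))
    {b : ℝ} (hb : slope g x y < b) : ∀ᶠ i in l, d i < b := by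
  filter_upwards [(tendsto_slope_of_tendsto hfx hfy).eventually_lt_const hb] with i hi
  exact ((hconv i).le_slope_of_hasDerivAt hx hy hxy (hd i)).trans_lt hi

theorem ConvexOn.eventually_lt_hasDerivAt_of_lt_slope (hconv : ∀ i, ConvexOn ℝ S (f i))
    (hx : x ∈ S) (hy : y ∈ S) (hxy : x < y) (hd : ∀ i, HasDerivAt (f i) (d i) y)
    (hfx : Tendsto (fun i => f i x) l (𝓝 (g x))) (hfy : Tendsto (fun i => f i y) l (𝓝 (g y)))
    {a : ℝ} (ha : a < slope g x y) : ∀ᶠ i in l, a < d i := by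
  filter_upwards [(tendsto_slope_of_tendsto hfx hfy).eventually_const_lt ha] with i hi
  exact hi.trans_le ((hconv i).slope_le_of_hasDerivAt hx hy hxy (hd i))

end ConvexOn

section HasDerivAt

variable {g : ℝ → ℝ} {g' x : ℝ} {s : Set ℝ}

theorem HasDerivAt.exists_gt_mem_slope_lt (hg : HasDerivAt g g' x) (hs : s ∈ 𝓝 x) {b : ℝ}
    (hb : g' < b) : ∃ y ∈ s, x < y ∧ slope g x y < b := by
  have hslope : ∀ᶠ y in 𝓝[>] x, slope g x y < b :=
    hg.hasDerivWithinAt.limsup_slope_le' (lt_irrefl x) hb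
  have hs' : ∀ᶠ y in 𝓝[>] x, y ∈ s := nhdsWithin_le_nhds hs
  obtain ⟨y, ⟨hys, hxy⟩, hy⟩ := (hs'.and self_mem_nhdsWithin |>.and hslope).exists
  exact ⟨y, hys, hxy, hy⟩

theorem HasDerivAt.exists_lt_mem_lt_slope (hg : HasDerivAt g g' x) (hs : s ∈ 𝓝 x) {a : ℝ}
    (ha : a < g') : ∃ y ∈ s, y < x ∧ a < slope g y x := by
  have hslope : ∀ᶠ y in 𝓝[<] x, a < slope g x y :=
    (hasDerivWithinAt_iff_tendsto_slope' (s := Iio x) (lt_irrefl x)).1 hg.hasDerivWithinAt (Ioi_mem_nhds ha)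
  have hs' : ∀ᶠ y in 𝓝[<] x, y ∈ s := nhdsWithin_le_nhds hs
  obtain ⟨y, ⟨hys, hyx⟩, hy⟩ := (hs'.and self_mem_nhdsWithin |>.and hslope).exists
  exact ⟨y, hys, hyx, slope_comm g x y ▸ hy⟩

end HasDerivAt

theorem deriv_tendsto_of_convex_pointwise_general
    (I : Set ℝ) (hIopen : IsOpen I)
    (f : ℕ → ℝ → ℝ) (g : ℝ → ℝ)
    (hconv : ∀ n, ConvexOn ℝ I (f n))
    (hptwise : ∀ x ∈ I, Tendsto (fun n => f n x) atTop (𝓝 (g x)))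
    (β : ℝ) (hβ : β ∈ I)
    (d : ℕ → ℝ) (hd : ∀ n, HasDerivAt (f n) (d n) β)
    (dg : ℝ) (hg : HasDerivAt g dg β) :
    Tendsto d atTop (𝓝 dg) := by
  have hI : I ∈ 𝓝 β := hIopen.mem_nhds hβ
  refine tendsto_order.2 ⟨fun a ha => ?_, fun b hb => ?_⟩
  · obtain ⟨z, hzI, hzβ, hz⟩ := hg.exists_lt_mem_lt_slope hI ha
    exact ConvexOn.eventually_lt_hasDerivAt_of_lt_slope hconv hzI hβ hzβ hd
      (hptwise z hzI) (hptwise β hβ) hz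
  · obtain ⟨y, hyI, hβy, hy⟩ := hg.exists_gt_mem_slope_lt hI hb
    exact ConvexOn.eventually_hasDerivAt_lt_of_slope_lt hconv hβ hyI hβy hd
      (hptwise β hβ) (hptwise y hyI) hy

/-- If convex functions `f_n` on an open interval `I` converge pointwise on `I` to `f`,
`β ∈ I`, each `f_n` is differentiable at `β` and `f` is differentiable at `β`, then
`f_n'(β) → f'(β)`. -/
theorem deriv_tendsto_of_convex_pointwise
    (I : Set ℝ) (hIopen : IsOpen I) (hIconv : Convex ℝ I)
    (f : ℕ → ℝ → ℝ) (g : ℝ → ℝ)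
    (hconv : ∀ n, ConvexOn ℝ I (f n))
    (hptwise : ∀ x ∈ I, Tendsto (fun n => f n x) atTop (𝓝 (g x)))
    (β : ℝ) (hβ : β ∈ I)
    (d : ℕ → ℝ) (hd : ∀ n, HasDerivAt (f n) (d n) β)
    (dg : ℝ) (hg : HasDerivAt g dg β) :
    Tendsto d atTop (𝓝 dg) :=
  deriv_tendsto_of_convex_pointwise_general I hIopen f g hconv hptwise β hβ d hd dg hg
end

section
/- Let p₁ < p₂ be even elements of S, let ε > 0, and let μ be a Borel probability measure on [0,1] with ∫ |q − x| dμ(q) ≥ ε for all x ∈ [0,1]. Assume that lim_{N→∞} E⟨R_{1,2}^{p_i}⟩ = ∫ q^{p_i} dμ(q) for i = 1, 2. Then there exists δ' > 0 such that for all sufficiently large N, E⟨(R_{1,2} − E⟨R_{1,2}⟩)²⟩ ≥ δ'. -/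
open MeasureTheory ProbabilityTheory Real Filter Topology

noncomputable section

/-- The spin value `±1` attached to a Boolean. -/
def spin (b : Bool) : ℝ := if b then 1 else -1

/-- Index set for the Gaussian disorder: pairs `(p, (i_1, …, i_p))` with `p ∈ S` and
`i_1, …, i_p ∈ {1, …, N}`. -/
abbrev DisorderIdx (S : Finset ℕ) (N : ℕ) := (p : {x // x ∈ S}) × (Fin (p : ℕ) → Fin N)

/-- The law of the disorder: i.i.d. standard Gaussian random variables `g^{(p)}_{i_1…i_p}`. -/
def disorder (S : Finset ℕ) (N : ℕ) : Measure (DisorderIdx S N → ℝ) :=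
  Measure.pi fun _ => gaussianReal 0 1

/-- The mixed `p`-spin Hamiltonian
`H_N(σ) = Σ_{p∈S} β_p N^{-(p-1)/2} Σ_{i_1,…,i_p} g^{(p)}_{i_1…i_p} σ_{i_1} ⋯ σ_{i_p}`. -/
def hamiltonian (S : Finset ℕ) (N : ℕ) (β : ℕ → ℝ) (g : DisorderIdx S N → ℝ)
    (σ : Fin N → Bool) : ℝ :=
  ∑ p : {x // x ∈ S}, β (p : ℕ) * (N : ℝ) ^ (-(((p : ℕ) : ℝ) - 1) / 2) *
    ∑ i : Fin (p : ℕ) → Fin N, g ⟨p, i⟩ * ∏ j, spin (σ (i j))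

/-- The energy including the external field: `H_N(σ) + h Σ_i σ_i`. -/
def energy (S : Finset ℕ) (N : ℕ) (h : ℝ) (β : ℕ → ℝ) (g : DisorderIdx S N → ℝ)
    (σ : Fin N → Bool) : ℝ :=
  hamiltonian S N β g σ + h * ∑ i, spin (σ i)

/-- The free energy `F_N(β) = N⁻¹ E log Σ_σ exp(H_N(σ) + h Σ_i σ_i)`. -/
def freeEnergy (S : Finset ℕ) (N : ℕ) (h : ℝ) (β : ℕ → ℝ) : ℝ :=
  (N : ℝ)⁻¹ *
    ∫ g, Real.log (∑ σ : Fin N → Bool, Real.exp (energy S N h β g σ)) ∂(disorder S N)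

/-- The Gibbs measure `G(σ) = exp(H_N(σ) + h Σ_i σ_i) / Σ_τ exp(H_N(τ) + h Σ_i τ_i)`. -/
def gibbs (S : Finset ℕ) (N : ℕ) (h : ℝ) (β : ℕ → ℝ) (g : DisorderIdx S N → ℝ)
    (σ : Fin N → Bool) : ℝ :=
  Real.exp (energy S N h β g σ) / ∑ τ : Fin N → Bool, Real.exp (energy S N h β g τ)

/-- The overlap `R_{1,2} = N⁻¹ Σ_{i ≤ N} σ¹_i σ²_i`. -/
def overlap (N : ℕ) (σ1 σ2 : Fin N → Bool) : ℝ :=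
  (N : ℝ)⁻¹ * ∑ i, spin (σ1 i) * spin (σ2 i)

/-- Gibbs average `⟨f(σ¹,σ²)⟩` over two independent replicas from the Gibbs measure. -/
def gibbsAvg2 (S : Finset ℕ) (N : ℕ) (h : ℝ) (β : ℕ → ℝ) (g : DisorderIdx S N → ℝ)
    (f : (Fin N → Bool) → (Fin N → Bool) → ℝ) : ℝ :=
  ∑ σ1 : Fin N → Bool, ∑ σ2 : Fin N → Bool, f σ1 σ2 * gibbs S N h β g σ1 * gibbs S N h β g σ2

/-- `E⟨R_{1,2}^p⟩`: expectation over the disorder of the Gibbs average of the `p`-th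
power of the overlap. -/
def overlapMoment (S : Finset ℕ) (N : ℕ) (h : ℝ) (β : ℕ → ℝ) (p : ℕ) : ℝ :=
  ∫ g, gibbsAvg2 S N h β g (fun σ1 σ2 => overlap N σ1 σ2 ^ p) ∂(disorder S N)

/-!
Write `a = E⟨R⟩`. Since `|x ^ p - a ^ p| ≤ p |x - a|` on `[-1, 1]`, Cauchy–Schwarz for the
annealed two-replica law `E[G ⊗ G]` gives `|E⟨R ^ p⟩ - a ^ p| ≤ p √(E⟨(R - a)²⟩)`. On the other
hand `t ↦ |∫ q ^ p₁ dμ - t ^ p₁| + |∫ q ^ p₂ dμ - t ^ p₂|` has a positive minimum `δ` on `[-1, 1]`: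
a zero at `t` would make `∫ q ^ p_i dμ = |t| ^ p_i`, the equality case of Jensen's inequality for
the strictly convex `u ↦ u ^ (p₂ / p₁)`, so `μ` would be a Dirac mass, which
`∫ |q - x| dμ ≥ ε` excludes. Once both moments are within `δ / 4` of their limits,
`δ ≤ δ / 2 + (p₁ + p₂) √(E⟨(R - a)²⟩)`.
-/

section WeightedAverage

variable {ι : Type*} [Fintype ι] {w : ι → ℝ}

theorem abs_pow_sub_pow_le_of_abs_le_one {a b : ℝ} (ha : |a| ≤ 1) (hb : |b| ≤ 1) (n : ℕ) :
    |a ^ n - b ^ n| ≤ n * |a - b| :=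
  calc |a ^ n - b ^ n| ≤ |a - b| * n * max |a| |b| ^ (n - 1) := abs_pow_sub_pow_le a b n
    _ ≤ |a - b| * n * 1 := by gcongr; exact pow_le_one₀ (by positivity) (max_le ha hb)
    _ = n * |a - b| := by ring

theorem abs_sum_mul_le_one (hw₀ : ∀ i, 0 ≤ w i) (hw₁ : ∑ i, w i = 1) {x : ι → ℝ}
    (hx : ∀ i, |x i| ≤ 1) : |∑ i, w i * x i| ≤ 1 :=
  calc |∑ i, w i * x i| ≤ ∑ i, w i * |x i| := by
        simpa only [abs_mul, abs_of_nonneg (hw₀ _)] using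
          Finset.abs_sum_le_sum_abs (fun i => w i * x i) Finset.univ
    _ ≤ ∑ i, w i * 1 := by gcongr with i; exacts [hw₀ i, hx i]
    _ = 1 := by simp [hw₁]

theorem sum_mul_abs_le_sqrt_sum_mul_sq (hw₀ : ∀ i, 0 ≤ w i) (hw₁ : ∑ i, w i = 1) (y : ι → ℝ) :
    ∑ i, w i * |y i| ≤ √(∑ i, w i * y i ^ 2) :=
  calc ∑ i, w i * |y i| = ∑ i, √(w i) * √(w i * y i ^ 2) := by
        congr 1; funext i
        rw [Real.sqrt_mul (hw₀ i), Real.sqrt_sq_eq_abs, ← mul_assoc, Real.mul_self_sqrt (hw₀ i)]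
    _ ≤ √(∑ i, w i) * √(∑ i, w i * y i ^ 2) :=
        Real.sum_sqrt_mul_sqrt_le _ hw₀ fun i => mul_nonneg (hw₀ i) (sq_nonneg _)
    _ = √(∑ i, w i * y i ^ 2) := by rw [hw₁, Real.sqrt_one, one_mul]

theorem abs_sum_mul_pow_sub_pow_le (hw₀ : ∀ i, 0 ≤ w i) (hw₁ : ∑ i, w i = 1) {x : ι → ℝ}
    (hx : ∀ i, |x i| ≤ 1) (p : ℕ) :
    |∑ i, w i * x i ^ p - (∑ i, w i * x i) ^ p|
      ≤ p * √(∑ i, w i * (x i - ∑ j, w j * x j) ^ 2) := by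
  set m := ∑ j, w j * x j
  have hm : |m| ≤ 1 := abs_sum_mul_le_one hw₀ hw₁ hx
  calc |∑ i, w i * x i ^ p - m ^ p| = |∑ i, w i * (x i ^ p - m ^ p)| := by
        simp only [mul_sub, Finset.sum_sub_distrib, ← Finset.sum_mul, hw₁, one_mul]
    _ ≤ ∑ i, w i * |x i ^ p - m ^ p| := by
        simpa only [abs_mul, abs_of_nonneg (hw₀ _)] using
          Finset.abs_sum_le_sum_abs (fun i => w i * (x i ^ p - m ^ p)) Finset.univ
    _ ≤ ∑ i, w i * (p * |x i - m|) := by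
        gcongr with i
        exacts [hw₀ i, abs_pow_sub_pow_le_of_abs_le_one (hx i) hm p]
    _ = p * ∑ i, w i * |x i - m| := by
        rw [Finset.mul_sum]; exact Finset.sum_congr rfl fun i _ => mul_left_comm _ _ _
    _ ≤ p * √(∑ i, w i * (x i - m) ^ 2) := by
        gcongr; exact sum_mul_abs_le_sqrt_sum_mul_sq hw₀ hw₁ _

theorem le_mul_sqrt_of_moment_gap (hw₀ : ∀ i, 0 ≤ w i) (hw₁ : ∑ i, w i = 1) {x : ι → ℝ}
    (hx : ∀ i, |x i| ≤ 1) {p₁ p₂ : ℕ} {m₁ m₂ δ : ℝ}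
    (hgap : ∀ t ∈ Set.Icc (-1 : ℝ) 1, δ ≤ |m₁ - t ^ p₁| + |m₂ - t ^ p₂|)
    (h₁ : |∑ i, w i * x i ^ p₁ - m₁| ≤ δ / 4) (h₂ : |∑ i, w i * x i ^ p₂ - m₂| ≤ δ / 4) :
    δ ≤ 2 * (p₁ + p₂) * √(∑ i, w i * (x i - ∑ j, w j * x j) ^ 2) := by
  have hm := abs_sum_mul_le_one hw₀ hw₁ hx
  have hδ := hgap _ (abs_le.1 hm)
  have e₁ := abs_sum_mul_pow_sub_pow_le hw₀ hw₁ hx p₁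
  have e₂ := abs_sum_mul_pow_sub_pow_le hw₀ hw₁ hx p₂
  have t₁ := abs_sub_le m₁ (∑ i, w i * x i ^ p₁) ((∑ i, w i * x i) ^ p₁)
  have t₂ := abs_sub_le m₂ (∑ i, w i * x i ^ p₂) ((∑ i, w i * x i) ^ p₂)
  rw [abs_sub_comm] at h₁ h₂
  linarith

end WeightedAverage

section MomentRigidity

theorem pow_rpow_div_natCast {q : ℝ} (hq : 0 ≤ q) {m : ℕ} (hm : m ≠ 0) (n : ℕ) :
    (q ^ m) ^ ((n : ℝ) / m) = q ^ n := by
  rw [← Real.rpow_natCast q m, ← Real.rpow_mul hq, mul_div_cancel₀ _ (Nat.cast_ne_zero.2 hm),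
    Real.rpow_natCast]

variable {μ : Measure ℝ} [IsProbabilityMeasure μ]

theorem integrable_pow_of_ae_mem_Icc (hμ : ∀ᵐ q ∂μ, q ∈ Set.Icc (0 : ℝ) 1) (n : ℕ) :
    Integrable (fun q => q ^ n) μ :=
  Integrable.of_bound (continuous_pow n).aestronglyMeasurable 1 <| hμ.mono fun q hq => by
    rw [norm_pow, Real.norm_of_nonneg hq.1]; exact pow_le_one₀ hq.1 hq.2

theorem ae_eq_of_integral_pow_eq_pow (hμ : ∀ᵐ q ∂μ, 0 ≤ q) {m n : ℕ} (hm : 0 < m) (hmn : m < n)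
    (hi₁ : Integrable (fun q => q ^ m) μ) (hi₂ : Integrable (fun q => q ^ n) μ)
    {s : ℝ} (hs : 0 ≤ s) (h₁ : ∫ q, q ^ m ∂μ = s ^ m) (h₂ : ∫ q, q ^ n ∂μ = s ^ n) :
    ∀ᵐ q ∂μ, q = s := by
  have hr : 1 < (n : ℝ) / m := by
    rw [one_lt_div (by positivity)]; exact_mod_cast hmn
  have hcomp : (fun q : ℝ => (q ^ m) ^ ((n : ℝ) / m)) =ᵐ[μ] fun q => q ^ n :=
    hμ.mono fun q hq => pow_rpow_div_natCast hq hm.ne' n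
  rcases (strictConvexOn_rpow hr).ae_eq_const_or_map_average_lt
    (Real.continuous_rpow_const (by positivity)).continuousOn isClosed_Ici
    (hμ.mono fun q hq => pow_nonneg hq m) hi₁ (hi₂.congr hcomp.symm) with hconst | hlt
  · filter_upwards [hconst, hμ] with q hq hq₀
    rw [Function.const_apply, average_eq_integral, h₁] at hq
    exact (pow_left_inj₀ hq₀ hs hm.ne').1 hq
  · rw [average_eq_integral, average_eq_integral, h₁, integral_congr_ae hcomp, h₂,
      pow_rpow_div_natCast hs hm.ne'] at hlt
    exact absurd hlt (lt_irrefl _)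

theorem exists_pos_le_moment_gap (hμ : ∀ᵐ q ∂μ, q ∈ Set.Icc (0 : ℝ) 1)
    (hnd : ∀ s ∈ Set.Icc (0 : ℝ) 1, ¬∀ᵐ q ∂μ, q = s) {p₁ p₂ : ℕ} (he₁ : Even p₁)
    (he₂ : Even p₂) (hp₁ : 0 < p₁) (hp₁₂ : p₁ < p₂) :
    ∃ δ > 0, ∀ t ∈ Set.Icc (-1 : ℝ) 1,
      δ ≤ |∫ q, q ^ p₁ ∂μ - t ^ p₁| + |∫ q, q ^ p₂ ∂μ - t ^ p₂| := by
  set Φ := fun t : ℝ => |∫ q, q ^ p₁ ∂μ - t ^ p₁| + |∫ q, q ^ p₂ ∂μ - t ^ p₂|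
  obtain ⟨t₀, ht₀, hmin⟩ := (isCompact_Icc (a := -1) (b := 1)).exists_isMinOn ⟨0, by norm_num⟩
    (by fun_prop : Continuous Φ).continuousOn
  refine ⟨Φ t₀, ?_, fun t ht => hmin ht⟩
  by_contra! hle
  have hΦ₁ : ∫ q, q ^ p₁ ∂μ = |t₀| ^ p₁ := by
    rw [he₁.pow_abs, ← sub_eq_zero, ← abs_nonpos_iff]
    linarith [abs_nonneg (∫ q, q ^ p₂ ∂μ - t₀ ^ p₂)]
  have hΦ₂ : ∫ q, q ^ p₂ ∂μ = |t₀| ^ p₂ := by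
    rw [he₂.pow_abs, ← sub_eq_zero, ← abs_nonpos_iff]
    linarith [abs_nonneg (∫ q, q ^ p₁ ∂μ - t₀ ^ p₁)]
  exact hnd |t₀| ⟨abs_nonneg t₀, abs_le.2 ht₀⟩ <|
    ae_eq_of_integral_pow_eq_pow (hμ.mono fun q hq => hq.1) hp₁ hp₁₂
      (integrable_pow_of_ae_mem_Icc hμ p₁) (integrable_pow_of_ae_mem_Icc hμ p₂) (abs_nonneg t₀)
      hΦ₁ hΦ₂

end MomentRigidity

section ReplicaWeight

variable {S : Finset ℕ} {N : ℕ} {h : ℝ} {β : ℕ → ℝ}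

instance (S : Finset ℕ) (N : ℕ) : IsProbabilityMeasure (disorder S N) := by
  unfold disorder; infer_instance

theorem abs_spin (b : Bool) : |spin b| = 1 := by cases b <;> simp [spin]

theorem abs_overlap_le_one (σ₁ σ₂ : Fin N → Bool) : |overlap N σ₁ σ₂| ≤ 1 := by
  have hsum : |∑ i, spin (σ₁ i) * spin (σ₂ i)| ≤ N := by
    simpa [abs_mul, abs_spin] using
      Finset.abs_sum_le_sum_abs (fun i => spin (σ₁ i) * spin (σ₂ i)) Finset.univ
  rw [overlap, abs_mul, abs_inv, Nat.abs_cast]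
  exact inv_mul_le_one_of_le₀ hsum (Nat.cast_nonneg N)

theorem partitionFunction_pos (g : DisorderIdx S N → ℝ) :
    0 < ∑ τ : Fin N → Bool, Real.exp (energy S N h β g τ) :=
  Finset.sum_pos (fun _ _ => Real.exp_pos _) Finset.univ_nonempty

theorem gibbs_nonneg (g : DisorderIdx S N → ℝ) (σ : Fin N → Bool) : 0 ≤ gibbs S N h β g σ :=
  div_nonneg (Real.exp_pos _).le (partitionFunction_pos g).le

theorem gibbs_le_one (g : DisorderIdx S N → ℝ) (σ : Fin N → Bool) : gibbs S N h β g σ ≤ 1 :=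
  div_le_one_of_le₀
    (Finset.single_le_sum (fun _ _ => (Real.exp_pos _).le) (Finset.mem_univ σ))
    (partitionFunction_pos g).le

theorem sum_gibbs (g : DisorderIdx S N → ℝ) : ∑ σ, gibbs S N h β g σ = 1 := by
  simp only [gibbs, ← Finset.sum_div]
  exact div_self (partitionFunction_pos g).ne'

theorem measurable_gibbs (σ : Fin N → Bool) :
    Measurable fun g : DisorderIdx S N → ℝ => gibbs S N h β g σ := by
  unfold gibbs energy hamiltonian; fun_prop

theorem integrable_gibbs_mul_gibbs (σ₁ σ₂ : Fin N → Bool) :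
    Integrable (fun g => gibbs S N h β g σ₁ * gibbs S N h β g σ₂) (disorder S N) :=
  Integrable.of_bound ((measurable_gibbs σ₁).mul (measurable_gibbs σ₂)).aestronglyMeasurable 1 <|
    .of_forall fun g => by
      rw [norm_mul, Real.norm_of_nonneg (gibbs_nonneg g σ₁),
        Real.norm_of_nonneg (gibbs_nonneg g σ₂)]
      exact mul_le_one₀ (gibbs_le_one g σ₁) (gibbs_nonneg g σ₂) (gibbs_le_one g σ₂)

def replicaWeight (S : Finset ℕ) (N : ℕ) (h : ℝ) (β : ℕ → ℝ)
    (σ : (Fin N → Bool) × (Fin N → Bool)) : ℝ :=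
  ∫ g, gibbs S N h β g σ.1 * gibbs S N h β g σ.2 ∂(disorder S N)

theorem replicaWeight_nonneg (σ : (Fin N → Bool) × (Fin N → Bool)) :
    0 ≤ replicaWeight S N h β σ :=
  integral_nonneg fun g => mul_nonneg (gibbs_nonneg g σ.1) (gibbs_nonneg g σ.2)

theorem integral_gibbsAvg2 (f : (Fin N → Bool) → (Fin N → Bool) → ℝ) :
    ∫ g, gibbsAvg2 S N h β g f ∂(disorder S N) = ∑ σ, replicaWeight S N h β σ * f σ.1 σ.2 := by
  simp only [gibbsAvg2, mul_assoc]
  rw [integral_finsetSum _ fun σ₁ _ => integrable_finsetSum _ fun σ₂ _ =>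
    (integrable_gibbs_mul_gibbs σ₁ σ₂).const_mul _]
  simp only [integral_finsetSum _ fun σ₂ _ => (integrable_gibbs_mul_gibbs _ σ₂).const_mul _,
    integral_const_mul, Fintype.sum_prod_type, replicaWeight, mul_comm]

theorem sum_replicaWeight : ∑ σ, replicaWeight S N h β σ = 1 := by
  simpa [gibbsAvg2, ← Finset.sum_mul_sum, sum_gibbs] using
    (integral_gibbsAvg2 (S := S) (h := h) (β := β) fun _ _ => 1).symm

theorem overlapMoment_eq_sum (p : ℕ) :
    overlapMoment S N h β p = ∑ σ, replicaWeight S N h β σ * overlap N σ.1 σ.2 ^ p :=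
  integral_gibbsAvg2 _

end ReplicaWeight

theorem overlap_not_self_averaging_general
    (S : Finset ℕ) (hS : ∀ p ∈ S, 0 < p) (h : ℝ) (β : ℕ → ℝ)
    (p₁ p₂ : ℕ) (hp₁ : p₁ ∈ S)
    (he₁ : Even p₁) (he₂ : Even p₂) (hp₁₂ : p₁ < p₂)
    (ε : ℝ) (hε : 0 < ε)
    (μ : Measure ℝ) (hμ : IsProbabilityMeasure μ) (hsupp : μ (Set.Icc (0 : ℝ) 1)ᶜ = 0)
    (hsep : ∀ x ∈ Set.Icc (0 : ℝ) 1, ε ≤ ∫ q, |q - x| ∂μ)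
    (hlim1 : Tendsto (fun N => overlapMoment S N h β p₁) atTop (𝓝 (∫ q, q ^ p₁ ∂μ)))
    (hlim2 : Tendsto (fun N => overlapMoment S N h β p₂) atTop (𝓝 (∫ q, q ^ p₂ ∂μ))) :
    ∃ δ' > (0 : ℝ), ∃ N₀ : ℕ, ∀ N ≥ N₀,
      δ' ≤ ∫ g, gibbsAvg2 S N h β g
          (fun σ1 σ2 => (overlap N σ1 σ2 - overlapMoment S N h β 1) ^ 2)
        ∂(disorder S N) := by
  have hnd : ∀ s ∈ Set.Icc (0 : ℝ) 1, ¬∀ᵐ q ∂μ, q = s := fun s hs hq => by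
    have : ∫ q, |q - s| ∂μ = 0 := integral_eq_zero_of_ae (hq.mono fun q hq => by simp [hq])
    linarith [hsep s hs]
  obtain ⟨δ, hδ, hgap⟩ := exists_pos_le_moment_gap (mem_ae_iff.2 hsupp) hnd he₁ he₂
    (hS p₁ hp₁) hp₁₂
  have hp : (0 : ℝ) < p₁ + p₂ := by have := hS p₁ hp₁; positivity
  obtain ⟨N₀, hN₀⟩ := eventually_atTop.1 <|
    (hlim1.eventually (Metric.closedBall_mem_nhds _ (by positivity : 0 < δ / 4))).and
      (hlim2.eventually (Metric.closedBall_mem_nhds _ (by positivity : 0 < δ / 4)))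
  refine ⟨(δ / (2 * (p₁ + p₂))) ^ 2, by positivity, N₀, fun N hN => ?_⟩
  obtain ⟨h₁, h₂⟩ := hN₀ N hN
  simp only [Real.dist_eq, overlapMoment_eq_sum] at h₁ h₂
  have hδV := le_mul_sqrt_of_moment_gap replicaWeight_nonneg sum_replicaWeight
    (fun σ => abs_overlap_le_one σ.1 σ.2) hgap h₁ h₂
  rw [integral_gibbsAvg2, overlapMoment_eq_sum]
  simp only [pow_one]
  rw [← Real.le_sqrt (by positivity) (Finset.sum_nonneg fun σ _ => ?_),
    div_le_iff₀' (by positivity)]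
  · exact hδV
  · exact mul_nonneg (replicaWeight_nonneg σ) (sq_nonneg _)

/-- Let `p₁ < p₂` be even elements of `S`, `ε > 0`, and let `μ` be a Borel probability
measure on `[0,1]` with `∫ |q - x| dμ(q) ≥ ε` for all `x ∈ [0,1]`. If
`E⟨R_{1,2}^{p_i}⟩ → ∫ q^{p_i} dμ` for `i = 1, 2`, then there is a `δ' > 0` such that
for all sufficiently large `N`, `E⟨(R_{1,2} - E⟨R_{1,2}⟩)²⟩ ≥ δ'`. -/
theorem overlap_not_self_averaging
    (S : Finset ℕ) (hS : ∀ p ∈ S, 0 < p) (h : ℝ) (β : ℕ → ℝ)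
    (p₁ p₂ : ℕ) (hp₁ : p₁ ∈ S) (hp₂ : p₂ ∈ S)
    (he₁ : Even p₁) (he₂ : Even p₂) (hp₁₂ : p₁ < p₂)
    (ε : ℝ) (hε : 0 < ε)
    (μ : Measure ℝ) (hμ : IsProbabilityMeasure μ) (hsupp : μ (Set.Icc (0 : ℝ) 1)ᶜ = 0)
    (hsep : ∀ x ∈ Set.Icc (0 : ℝ) 1, ε ≤ ∫ q, |q - x| ∂μ)
    (hlim1 : Tendsto (fun N => overlapMoment S N h β p₁) atTop (𝓝 (∫ q, q ^ p₁ ∂μ)))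
    (hlim2 : Tendsto (fun N => overlapMoment S N h β p₂) atTop (𝓝 (∫ q, q ^ p₂ ∂μ))) :
    ∃ δ' > (0 : ℝ), ∃ N₀ : ℕ, ∀ N ≥ N₀,
      δ' ≤ ∫ g, gibbsAvg2 S N h β g
          (fun σ1 σ2 => (overlap N σ1 σ2 - overlapMoment S N h β 1) ^ 2)
        ∂(disorder S N) :=
  overlap_not_self_averaging_general S hS h β p₁ p₂ hp₁ he₁ he₂ hp₁₂ ε hε μ hμ hsupp hsep hlim1
    hlim2
end
end
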